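/- For q = 1 and R a commutative ring with 1, the representation σ_{r,s}: B^n_{r,s} → End_G(V^{⊗r} ⊗ (V*)^{⊗s}) of the walled Brauer algebra is surjective if and only if the representation σ_{r+s}: R𝔖_{r+s} → End_G(V^{⊗(r+s)}) of the symmetric group algebra is surjective, where G = GL_n(R). -/

import Mathlib

namespace ClassicalWalledBrauer

variable (R : Type*) [CommRing R] (n r s : ℕ)

/-- Multi-indices labelling the basis of `V^{⊗r} ⊗ (V^*)^{⊗s}` (or of `V^{⊗(r+s)}`),
`V = R^n`. -/
abbrev Idx (n m : ℕ) := Fin m → Fin n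

/-- Mixed tensor space `V^{⊗r} ⊗ (V^*)^{⊗s}` (and likewise ordinary tensor space
`V^{⊗(r+s)}`), modelled on its basis of multi-indices; positions `< r` carry `V`,
positions `≥ r` carry `V^*` (identified with `V` via `v_i ↦ v_i^*`). -/
abbrev TSpace (R : Type*) [CommRing R] (n m : ℕ) := Idx n m → R

/-- Matrix of the action of `g ∈ GL_n(R)` on mixed tensor space: `g` acts naturally on the
`V`-factors (positions `< r`) and by `(g·f)(v) = f(g⁻¹ v)` on the `V^*`-factors. -/
def glMixedMatrix (g : GL (Fin n) R) : Matrix (Idx n (r + s)) (Idx n (r + s)) R :=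
  fun a a' => ∏ k : Fin (r + s),
    if (k : ℕ) < r then (g : Matrix (Fin n) (Fin n) R) (a k) (a' k)
    else ((g⁻¹ : GL (Fin n) R) : Matrix (Fin n) (Fin n) R) (a' k) (a k)

/-- Matrix of the natural action of `g ∈ GL_n(R)` on ordinary tensor space `V^{⊗m}`. -/
def glOrdMatrix (m : ℕ) (g : GL (Fin n) R) : Matrix (Idx n m) (Idx n m) R :=
  fun a a' => ∏ k : Fin m, (g : Matrix (Fin n) (Fin n) R) (a k) (a' k)

/-- `G`-endomorphisms of mixed tensor space. -/
def EndGMixed : Set (Module.End R (TSpace R n (r + s))) :=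
  {φ | ∀ g : GL (Fin n) R, Commute φ (Matrix.toLin' (glMixedMatrix R n r s g))}

/-- `G`-endomorphisms of ordinary tensor space `V^{⊗(r+s)}`. -/
def EndGOrd : Set (Module.End R (TSpace R n (r + s))) :=
  {φ | ∀ g : GL (Fin n) R, Commute φ (Matrix.toLin' (glOrdMatrix R n (r + s) g))}

/-- Vertices of a Brauer `(r+s)`-diagram: top row (`inl`) and bottom row (`inr`). -/
abbrev Vertex (m : ℕ) := Fin m ⊕ Fin m

/-- The row (top = `true`) of a vertex. -/
def rowOf {m : ℕ} : Vertex m → Bool := Sum.elim (fun _ => true) (fun _ => false)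

/-- Whether a vertex lies to the left of the wall (in the first `r` positions). -/
def leftOf {m : ℕ} (r : ℕ) : Vertex m → Bool :=
  Sum.elim (fun k => decide ((k : ℕ) < r)) (fun k => decide ((k : ℕ) < r))

/-- A walled Brauer diagram: a perfect matching of the `2(r+s)` vertices such that
propagating edges (connecting opposite rows) stay on one side of the wall, and horizontal
edges (within a row) cross the wall. -/
def IsWalled (d : Vertex (r + s) → Vertex (r + s)) : Prop :=
  (∀ v, d (d v) = v) ∧ (∀ v, d v ≠ v) ∧
  (∀ v, (rowOf v ≠ rowOf (d v) → leftOf r v = leftOf r (d v)) ∧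
        (rowOf v = rowOf (d v) → leftOf r v ≠ leftOf r (d v)))

/-- The walled Brauer diagrams. -/
def WalledDiagram := {d : Vertex (r + s) → Vertex (r + s) // IsWalled r s d}

/-- The matrix of the action of a Brauer diagram `d` (for `q = 1`): the `(a, b)` entry is
`1` if both ends of each edge of `d` carry the same index (top row labelled by `a`, bottom
row by `b`), and `0` otherwise. -/
def diagMatrix (m : ℕ) (d : Vertex m → Vertex m) : Matrix (Idx n m) (Idx n m) R :=
  fun a b =>
    if ∀ v, Sum.elim a b v = Sum.elim a b (d v) then 1 else 0

/-- Matrix of the place-permutation action of `σ ∈ 𝔖_m` on `V^{⊗m}` (the totally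
propagating Brauer diagram of `σ`). -/
def permMatrix (m : ℕ) (σ : Equiv.Perm (Fin m)) : Matrix (Idx n m) (Idx n m) R :=
  fun a b => if b = a ∘ σ then 1 else 0

/-- The representation `σ_{r,s}` of the walled Brauer algebra `B^n_{r,s}` (as the free
`R`-module on walled Brauer diagrams) on mixed tensor space. -/
noncomputable def walledRep :
    (WalledDiagram r s →₀ R) →ₗ[R] Module.End R (TSpace R n (r + s)) :=
  Finsupp.lift (Module.End R (TSpace R n (r + s))) R (WalledDiagram r s)
    (fun d => Matrix.toLin' (diagMatrix R n (r + s) d.1))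

/-- The representation `σ_{r+s}` of the group algebra `R𝔖_{r+s}` on ordinary tensor
space. -/
noncomputable def symRep :
    MonoidAlgebra R (Equiv.Perm (Fin (r + s))) →ₗ[R] Module.End R (TSpace R n (r + s)) :=
  Finsupp.lift (Module.End R (TSpace R n (r + s))) R (Equiv.Perm (Fin (r + s)))
    (fun σ => Matrix.toLin' (permMatrix R n (r + s) σ)) ∘ₗ
    (MonoidAlgebra.coeffLinearEquiv R).toLinearMap

/-!
Partial transposition in the dual tensor factors is an `R`-linear involution of
`End(V^{⊗(r+s)})`, `M ↦ M'`. If `X` and `Y` are the actions of `g` on `V^{⊗r} ⊗ (V^*)^{⊗s}` and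
on `V^{⊗(r+s)}`, it sends `M X` and `X M` to `W M' Y W` and `W Y M' W` for an invertible `W`
(which acts as `g⁻¹` on the dual factors), so it carries the mixed `G`-endomorphisms bijectively
onto the ordinary ones. On diagrams it is conjugation by the exchange of the two rows to the
right of the wall, which turns the walled Brauer diagrams into exactly the permutation diagrams;
so it also carries the image of `σ_{r,s}` onto the image of `σ_{r+s}`.
-/

section PartialTranspose

open Matrix

variable {R} {ι κ : Type*} (T : Set ι) [DecidablePred (· ∈ T)]

lemma piecewise_piecewise_swap (a b : ι → κ) :
    T.piecewise (T.piecewise a b) (T.piecewise b a) = a := by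
  ext i
  by_cases hi : i ∈ T <;> simp [hi]

def partialTranspose : Matrix (ι → κ) (ι → κ) R ≃ₗ[R] Matrix (ι → κ) (ι → κ) R where
  toFun M := Matrix.of fun a b => M (T.piecewise b a) (T.piecewise a b)
  invFun M := Matrix.of fun a b => M (T.piecewise b a) (T.piecewise a b)
  map_add' _ _ := rfl
  map_smul' _ _ := rfl
  left_inv M := by ext a b; simp [piecewise_piecewise_swap]
  right_inv M := by ext a b; simp [piecewise_piecewise_swap]

lemma partialTranspose_apply (M : Matrix (ι → κ) (ι → κ) R) (a b : ι → κ) :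
    partialTranspose T M a b = M (T.piecewise b a) (T.piecewise a b) := rfl

variable [Fintype ι] [DecidableEq ι] [Fintype κ] [DecidableEq κ]

variable (R) in
def piKronecker : (ι → Matrix κ κ R) →* Matrix (ι → κ) (ι → κ) R where
  toFun A := Matrix.of fun a b => ∏ i, A i (a i) (b i)
  map_one' := by
    ext a b
    simp only [Pi.one_apply, one_apply, of_apply, Fintype.prod_boole, funext_iff]
  map_mul' A B := by
    ext a b
    simp only [Pi.mul_apply, mul_apply, of_apply, Fintype.prod_sum, ← Finset.prod_mul_distrib]

lemma piKronecker_apply (A : ι → Matrix κ κ R) (a b : ι → κ) :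
    piKronecker R A a b = ∏ i, A i (a i) (b i) := rfl

lemma partialTranspose_piKronecker_mul_mul (A B : ι → Matrix κ κ R)
    (M : Matrix (ι → κ) (ι → κ) R) :
    partialTranspose T (piKronecker R A * M * piKronecker R B) =
      piKronecker R (T.piecewise (fun i => (B i)ᵀ) A) * partialTranspose T M *
        piKronecker R (T.piecewise (fun i => (A i)ᵀ) B) := by
  ext a b
  simp only [partialTranspose_apply, mul_apply, Finset.sum_mul, ← Fintype.sum_prod_type']
  let swap : (ι → κ) × (ι → κ) ≃ (ι → κ) × (ι → κ) :=
    { toFun p := (T.piecewise p.2 p.1, T.piecewise p.1 p.2)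
      invFun p := (T.piecewise p.2 p.1, T.piecewise p.1 p.2)
      left_inv p := by simp [piecewise_piecewise_swap]
      right_inv p := by simp [piecewise_piecewise_swap] }
  refine Fintype.sum_equiv swap _ _ fun p => ?_
  have key : (∏ i, A i (T.piecewise b a i) (p.2 i)) * ∏ i, B i (p.1 i) (T.piecewise a b i) =
      (∏ i, T.piecewise (fun i => (B i)ᵀ) A i (a i) (T.piecewise p.1 p.2 i)) *
      ∏ i, T.piecewise (fun i => (A i)ᵀ) B i (T.piecewise p.2 p.1 i) (b i) := by
    simp only [← Finset.prod_mul_distrib]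
    refine Finset.prod_congr rfl fun i _ => ?_
    by_cases hi : i ∈ T <;> simp [hi, mul_comm]
  simp only [swap, Equiv.coe_fn_mk, piecewise_piecewise_swap, piKronecker_apply]
  linear_combination M p.2 p.1 * key

lemma commute_piKronecker_iff (M : Matrix (ι → κ) (ι → κ) R) (g : GL κ R) :
    Commute M (piKronecker R (T.piecewise (fun _ => (↑g⁻¹ : Matrix κ κ R)ᵀ) fun _ => ↑g)) ↔
      Commute (partialTranspose T M) (piKronecker R fun _ => (g : Matrix κ κ R)) := by
  set P := partialTranspose T M
  set X := piKronecker R (T.piecewise (fun _ => (↑g⁻¹ : Matrix κ κ R)ᵀ) fun _ => ↑g)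
  set Y := piKronecker R fun _ : ι => (g : Matrix κ κ R)
  set W := piKronecker R (T.piecewise (fun _ => (↑g⁻¹ : Matrix κ κ R)) 1)
  have hW : IsUnit W := by
    have : IsUnit (T.piecewise (fun _ => (↑g⁻¹ : Matrix κ κ R)) 1) :=
      Pi.isUnit_iff.mpr fun i => by by_cases hi : i ∈ T <;> simp [hi]
    exact this.map _
  have hMX : partialTranspose T (M * X) = W * P * (Y * W) := by
    rw [← one_mul M, ← map_one (piKronecker R), partialTranspose_piKronecker_mul_mul, ← map_mul]
    refine congrArg₂ (· * ·) (congrArg (· * P) (congrArg _ (funext fun i => ?_)))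
      (congrArg _ (funext fun i => ?_)) <;> by_cases hi : i ∈ T <;> simp [hi]
  have hXM : partialTranspose T (X * M) = W * Y * P * W := by
    rw [← mul_one (X * M), ← map_one (piKronecker R), partialTranspose_piKronecker_mul_mul,
      ← map_mul]
    refine congrArg₂ (· * ·) (congrArg (· * P) (congrArg _ (funext fun i => ?_)))
      (congrArg _ (funext fun i => ?_)) <;> by_cases hi : i ∈ T <;> simp [hi]
  rw [commute_iff_eq, commute_iff_eq, ← (partialTranspose T).injective.eq_iff, hMX, hXM]
  simp only [mul_assoc, hW.mul_right_inj]
  simp only [← mul_assoc, hW.mul_left_inj]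

end PartialTranspose

lemma commute_toLin'_iff {R ι : Type*} [CommRing R] [Fintype ι] [DecidableEq ι]
    (φ : Module.End R (ι → R)) (A : Matrix ι ι R) :
    Commute φ (Matrix.toLin' A) ↔ Commute (LinearMap.toMatrix' φ) A := by
  conv_lhs => rw [← Matrix.toLin'_toMatrix' φ]
  exact commute_map_iff (f := Matrix.toLinAlgEquiv') (AlgEquiv.injective _)

section Wall

open Matrix

variable {R n r s}

abbrev dualFactors (r m : ℕ) : Set (Fin m) := {k | r ≤ (k : ℕ)}

lemma glMixedMatrix_eq_piKronecker (g : GL (Fin n) R) :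
    glMixedMatrix R n r s g = piKronecker R
      ((dualFactors r (r + s)).piecewise (fun _ => (↑g⁻¹ : Matrix (Fin n) (Fin n) R)ᵀ)
        fun _ => ↑g) := by
  ext a b
  refine Finset.prod_congr rfl fun k _ => ?_
  by_cases hk : (k : ℕ) < r
  · simp [hk]
  · simp [hk, not_lt.mp hk]

lemma glOrdMatrix_eq_piKronecker (m : ℕ) (g : GL (Fin n) R) :
    glOrdMatrix R n m g = piKronecker R fun _ => (g : Matrix (Fin n) (Fin n) R) := rfl

variable (R n r s) in
noncomputable def wallTranspose :
    Module.End R (TSpace R n (r + s)) ≃ₗ[R] Module.End R (TSpace R n (r + s)) :=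
  LinearMap.toMatrix'.trans ((partialTranspose (dualFactors r (r + s))).trans Matrix.toLin')

lemma wallTranspose_toLin' (M : Matrix (Idx n (r + s)) (Idx n (r + s)) R) :
    wallTranspose R n r s (Matrix.toLin' M) =
      Matrix.toLin' (partialTranspose (dualFactors r (r + s)) M) := by
  simp [wallTranspose]

lemma wallTranspose_mem_EndGOrd_iff (φ : Module.End R (TSpace R n (r + s))) :
    wallTranspose R n r s φ ∈ EndGOrd R n r s ↔ φ ∈ EndGMixed R n r s := by
  refine forall_congr' fun g => ?_
  rw [commute_toLin'_iff, commute_toLin'_iff, glMixedMatrix_eq_piKronecker,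
    glOrdMatrix_eq_piKronecker, commute_piKronecker_iff]
  simp [wallTranspose]

lemma image_wallTranspose_EndGMixed :
    wallTranspose R n r s '' EndGMixed R n r s = EndGOrd R n r s := by
  ext ψ
  rw [(wallTranspose R n r s).image_eq_preimage_symm, Set.mem_preimage,
    ← wallTranspose_mem_EndGOrd_iff, LinearEquiv.apply_symm_apply]

end Wall

section Diagrams

variable {R n r s} {m : ℕ}

/-- Conjugation by `wallFlip r` turns walled diagrams into diagrams all of whose edges are
propagating, i.e. into permutation diagrams. -/
def wallFlip (r : ℕ) (v : Vertex m) : Vertex m := if leftOf r v then v else v.swap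

lemma leftOf_swap (v : Vertex m) : leftOf r v.swap = leftOf r v := by
  cases v <;> rfl

lemma leftOf_wallFlip (v : Vertex m) : leftOf r (wallFlip r v) = leftOf r v := by
  unfold wallFlip; split_ifs <;> simp [leftOf_swap]

lemma rowOf_wallFlip (v : Vertex m) : rowOf (wallFlip r v) = (rowOf v == leftOf r v) := by
  unfold wallFlip
  rcases v with k | k <;> by_cases hk : (k : ℕ) < r <;> simp [rowOf, leftOf, hk]

lemma wallFlip_involutive : Function.Involutive (wallFlip (m := m) r) := by
  intro v
  unfold wallFlip
  split_ifs <;> simp_all [leftOf_swap]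

lemma sumElim_piecewise_eq_comp_wallFlip (a b : Idx n m) :
    Sum.elim ((dualFactors r m).piecewise b a) ((dualFactors r m).piecewise a b) =
      Sum.elim a b ∘ wallFlip r := by
  ext v
  rcases v with k | k <;> by_cases hk : (k : ℕ) < r <;>
    simp [wallFlip, leftOf, hk, Set.piecewise, ← not_lt]

lemma partialTranspose_diagMatrix (d : Vertex m → Vertex m) :
    partialTranspose (dualFactors r m) (diagMatrix R n m d) =
      diagMatrix R n m (wallFlip r ∘ d ∘ wallFlip r) := by
  ext a b
  simp only [partialTranspose_apply, diagMatrix, sumElim_piecewise_eq_comp_wallFlip,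
    Function.comp_apply]
  refine if_congr ?_ rfl rfl
  rw [(wallFlip_involutive (r := r)).surjective.forall]
  simp only [wallFlip_involutive _]

def permDiagram (σ : Equiv.Perm (Fin m)) : Vertex m → Vertex m :=
  Sum.elim (fun k => .inr (σ.symm k)) (fun k => .inl (σ k))

lemma permDiagram_involutive (σ : Equiv.Perm (Fin m)) : Function.Involutive (permDiagram σ) := by
  rintro (k | k) <;> simp [permDiagram]

lemma rowOf_permDiagram_ne (σ : Equiv.Perm (Fin m)) (v : Vertex m) :
    rowOf (permDiagram σ v) ≠ rowOf v := by
  rcases v with k | k <;> simp [permDiagram, rowOf]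

lemma diagMatrix_permDiagram (σ : Equiv.Perm (Fin m)) :
    diagMatrix R n m (permDiagram σ) = permMatrix R n m σ := by
  ext a b
  refine if_congr ?_ rfl rfl
  simp only [Sum.forall, permDiagram, Sum.elim_inl, Sum.elim_inr, funext_iff, Function.comp_apply]
  constructor
  · exact fun h k => h.2 k
  · intro h
    exact ⟨fun k => by rw [h, Equiv.apply_symm_apply], fun k => h k⟩

lemma exists_eq_permDiagram {D : Vertex m → Vertex m} (hD : Function.Involutive D)
    (hrow : ∀ v, rowOf (D v) ≠ rowOf v) : ∃ σ : Equiv.Perm (Fin m), D = permDiagram σ := by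
  have hl : ∀ k, ∃ j, D (.inl k) = .inr j := fun k => by
    rcases h : D (.inl k) with j | j
    · exact (hrow _ (by rw [h]; rfl)).elim
    · exact ⟨j, rfl⟩
  have hr : ∀ k, ∃ j, D (.inr k) = .inl j := fun k => by
    rcases h : D (.inr k) with j | j
    · exact ⟨j, rfl⟩
    · exact (hrow _ (by rw [h]; rfl)).elim
  choose f hf using hl
  choose g hg using hr
  have hgf : ∀ k, g (f k) = k := fun k => by
    simpa [hf, hg] using hD (.inl k)
  have hfg : ∀ k, f (g k) = k := fun k => by
    simpa [hf, hg] using hD (.inr k)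
  refine ⟨⟨g, f, hfg, hgf⟩, funext ?_⟩
  rintro (k | k) <;> simp [permDiagram, hf, hg]

lemma isWalled_wallFlip_conj_iff {D : Vertex (r + s) → Vertex (r + s)} :
    IsWalled r s (wallFlip r ∘ D ∘ wallFlip r) ↔
      Function.Involutive D ∧ ∀ v, rowOf (D v) ≠ rowOf v := by
  have hF := wallFlip_involutive (m := r + s) (r := r)
  have hconj : ∀ w, (wallFlip r ∘ D ∘ wallFlip r) (wallFlip r w) = wallFlip r (D w) := by
    simp [hF _]
  have hedge : ∀ w : Vertex (r + s),
      ((rowOf (wallFlip r w) ≠ rowOf (wallFlip r (D w)) →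
          leftOf r (wallFlip r w) = leftOf r (wallFlip r (D w))) ∧
        (rowOf (wallFlip r w) = rowOf (wallFlip r (D w)) →
          leftOf r (wallFlip r w) ≠ leftOf r (wallFlip r (D w)))) ↔ rowOf (D w) ≠ rowOf w := by
    intro w
    simp only [rowOf_wallFlip, leftOf_wallFlip]
    cases rowOf w <;> cases leftOf r w <;> cases rowOf (D w) <;> cases leftOf r (D w) <;> decide
  constructor
  · rintro ⟨hinv, -, hwall⟩
    refine ⟨fun w => hF.injective ?_, fun w => (hedge w).mp ?_⟩
    · simpa [hF _] using hinv (wallFlip r w)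
    · simpa only [hconj] using hwall (wallFlip r w)
  · rintro ⟨hinv, hrow⟩
    refine ⟨fun v => ?_, fun v h => ?_, fun v => ?_⟩ <;> obtain ⟨w, rfl⟩ := hF.surjective v
    · simp [hF _, hinv _]
    · exact hrow w (congrArg rowOf (hF.injective (by simpa only [hconj] using h)))
    · simpa only [hconj] using (hedge w).mpr (hrow w)

lemma range_partialTranspose_diagMatrix :
    Set.range (fun d : WalledDiagram r s =>
        partialTranspose (dualFactors r (r + s)) (diagMatrix R n (r + s) d.1)) =
      Set.range (permMatrix R n (r + s)) := by
  have hflip : ∀ D : Vertex (r + s) → Vertex (r + s),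
      wallFlip r ∘ (wallFlip r ∘ D ∘ wallFlip r) ∘ wallFlip r = D := fun D => by
    funext v
    simp [wallFlip_involutive _]
  ext M
  constructor
  · rintro ⟨d, rfl⟩
    have hd : IsWalled r s (wallFlip r ∘ (wallFlip r ∘ d.1 ∘ wallFlip r) ∘ wallFlip r) := by
      rw [hflip]
      exact d.2
    obtain ⟨hinv, hrow⟩ := isWalled_wallFlip_conj_iff.mp hd
    obtain ⟨σ, hσ⟩ := exists_eq_permDiagram hinv hrow
    refine ⟨σ, ?_⟩
    dsimp only
    rw [partialTranspose_diagMatrix, hσ, diagMatrix_permDiagram]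
  · rintro ⟨σ, rfl⟩
    refine ⟨⟨_, isWalled_wallFlip_conj_iff.mpr
      ⟨permDiagram_involutive σ, rowOf_permDiagram_ne σ⟩⟩, ?_⟩
    show partialTranspose _ (diagMatrix R n (r + s) (wallFlip r ∘ permDiagram σ ∘ wallFlip r)) = _
    rw [partialTranspose_diagMatrix, hflip, diagMatrix_permDiagram]

end Diagrams

lemma range_walledRep : LinearMap.range (walledRep R n r s) = Submodule.span R
    (Set.range fun d : WalledDiagram r s => Matrix.toLin' (diagMatrix R n (r + s) d.1)) :=
  Finsupp.range_linearCombination R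

lemma range_symRep : LinearMap.range (symRep R n r s) = Submodule.span R
    (Set.range fun σ : Equiv.Perm (Fin (r + s)) => Matrix.toLin' (permMatrix R n (r + s) σ)) :=
  (LinearEquiv.range_comp _ _).trans (Finsupp.range_linearCombination R)

lemma image_wallTranspose_range_walledRep :
    wallTranspose R n r s '' LinearMap.range (walledRep R n r s) =
      LinearMap.range (symRep R n r s) := by
  have h := congrArg (Matrix.toLin' '' ·)
    (range_partialTranspose_diagMatrix (R := R) (n := n) (r := r) (s := s))
  simp only [← Set.range_comp, Function.comp_def] at h
  rw [← LinearEquiv.coe_toLinearMap, ← Submodule.map_coe, range_walledRep, range_symRep,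
    Submodule.map_span, ← Set.range_comp]
  simp only [Function.comp_def, LinearEquiv.coe_toLinearMap, wallTranspose_toLin', h]

/-- q = 1: `σ_{r,s} : B^n_{r,s} → End_G(V^{⊗r} ⊗ (V^*)^{⊗s})` is surjective
if and only if `σ_{r+s} : R𝔖_{r+s} → End_G(V^{⊗(r+s)})` is surjective, `G = GL_n(R)`. -/
theorem walled_surjective_iff_sym_surjective :
    ((LinearMap.range (walledRep R n r s) : Set (Module.End R (TSpace R n (r + s)))) =
        EndGMixed R n r s) ↔
    ((LinearMap.range (symRep R n r s) : Set (Module.End R (TSpace R n (r + s)))) =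
        EndGOrd R n r s) := by
  rw [← image_wallTranspose_range_walledRep, ← image_wallTranspose_EndGMixed]
  exact (Set.image_eq_image (wallTranspose R n r s).injective).symm

end ClassicalWalledBrauer
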